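/- arXiv:1303.2424 — 2 statements merged into one kernel-verified Lean document; each statement's English description precedes it below -/
import Mathlib

section
/- Let B be a unital C*-algebra and let A be a closed star-subalgebra of B. Then the sequence of subspaces Z^n(A) stabilizes from n = 1: for every n ≥ 1, Z^n(A) = Z^{n+1}(A). Equivalently, for every b ∈ B and n ≥ 1, all n-fold iterated commutators [...[b, a₁], …, a_n] with a₁, …, a_n ∈ A vanish if and only if all (n+1)-fold iterated commutators [...[b, a₁], …, a_{n+1}] with a₁, …, a_{n+1} ∈ A vanish. -/
/-! If `a` is self-adjoint and commutes with `[b, a]`, the unitaries `exp (t • I • a)`, `t : ℝ`,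
conjugate `b` to `b + t • I • [a, b]`: the exponential of `ad (t • I • a)` stops after its linear
term. A line of constant norm `‖b‖` is bounded only if it is a point, so `[b, a] = 0`. Writing
`a = ℜ a + I • ℑ a` extends this to all `a ∈ A`, which is `Z¹(A) = Z²(A)`; and since `b ∈ Zⁿ⁺¹`
iff `[b, a] ∈ Zⁿ` for all `a ∈ A`, the equality `Zⁿ = Zⁿ⁺¹` propagates to all `n ≥ 1`. -/

/-- The ring commutator `[b, c] = b·c − c·b`. -/
def ringbrkt {B : Type*} [Mul B] [Sub B] (b c : B) : B := b * c - c * b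

open NormedSpace Complex ComplexStarModule

theorem ringbrkt_eq_zero_iff {R : Type*} [Ring R] {a b : R} : ringbrkt a b = 0 ↔ Commute a b :=
  sub_eq_zero

section HigherCentralizer

variable {B : Type*} [Mul B] [Sub B] [Zero B]

/-- The space `Zⁿ(S)`. -/
def higherCentralizer (S : Set B) (n : ℕ) : Set B :=
  {b | ∀ l : List B, l.length = n → (∀ a ∈ l, a ∈ S) → l.foldl ringbrkt b = 0}

variable {S : Set B} {b : B} {n : ℕ}

theorem mem_higherCentralizer_zero : b ∈ higherCentralizer S 0 ↔ b = 0 := by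
  simp [higherCentralizer]

theorem mem_higherCentralizer_succ :
    b ∈ higherCentralizer S (n + 1) ↔ ∀ a ∈ S, ringbrkt b a ∈ higherCentralizer S n := by
  constructor
  · intro h a ha l hl hlS
    exact h (a :: l) (by simp [hl]) (by simpa [ha] using hlS)
  · rintro h (_ | ⟨a, l⟩) hl hlS
    · simp at hl
    · simp only [List.mem_cons, forall_eq_or_imp] at hlS
      exact h a hlS.1 l (by simpa using hl) hlS.2

theorem higherCentralizer_succ_eq_of_eq
    (h : higherCentralizer S n = higherCentralizer S (n + 1)) :
    higherCentralizer S (n + 1) = higherCentralizer S (n + 2) := by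
  ext b
  rw [mem_higherCentralizer_succ, mem_higherCentralizer_succ, h]

end HigherCentralizer

theorem mem_higherCentralizer_one {R : Type*} [Ring R] {S : Set R} {b : R} :
    b ∈ higherCentralizer S 1 ↔ ∀ a ∈ S, Commute b a := by
  simp only [mem_higherCentralizer_succ, mem_higherCentralizer_zero, ringbrkt_eq_zero_iff]

theorem eq_zero_of_forall_norm_add_smul_le {E : Type*} [NormedAddCommGroup E] [NormedSpace ℝ E]
    {b d : E} {C : ℝ} (h : ∀ t : ℝ, ‖b + t • d‖ ≤ C) : d = 0 := by
  by_contra hd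
  have hd : 0 < ‖d‖ := norm_pos_iff.mpr hd
  set t := (C + ‖b‖ + 1) / ‖d‖
  have ht : ‖t • d‖ = C + ‖b‖ + 1 := by
    have := (norm_nonneg _).trans (h 0)
    rw [norm_smul, Real.norm_of_nonneg (by positivity), div_mul_cancel₀ _ hd.ne']
  have := norm_sub_le (b + t • d) b
  rw [add_sub_cancel_left, ht] at this
  linarith [h t]

theorem exp_mul_mul_exp_neg_of_commute {𝔸 : Type*} [NormedRing 𝔸] [NormedAlgebra ℝ 𝔸]
    [CompleteSpace 𝔸] {x b : 𝔸} (h : Commute x (x * b - b * x)) :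
    exp x * b * exp (-x) = b + (x * b - b * x) := by
  let _ : NormedAlgebra ℚ 𝔸 := .restrictScalars ℚ ℝ 𝔸
  set d := x * b - b * x
  let f : ℝ → 𝔸 := fun t ↦ exp (t • x) * b * exp (t • -x) - t • d
  have hf : ∀ t, HasDerivAt f 0 t := by
    intro t
    have hconj : exp (t • x) * d * exp (t • -x) = d := by
      simpa using ((h.smul_left t).symm.neg_right).exp_neg_mul_mul_exp_eq_self
    refine (((hasDerivAt_exp_smul_const x t).mul_const b).mul
      (hasDerivAt_exp_smul_const' (-x) t)).sub ((hasDerivAt_id t).smul_const d) |>.congr_deriv ?_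
    rw [one_smul, sub_eq_zero, ← hconj]
    simp only [d]
    noncomm_ring
  have := is_const_of_deriv_eq_zero (fun t ↦ (hf t).differentiableAt) (fun t ↦ (hf t).deriv) 1 0
  rw [add_comm]
  simpa [f, sub_eq_iff_eq_add'] using this

section CStarRing

variable {B : Type*} [NormedRing B] [StarRing B] [CStarRing B]
    [NormedAlgebra ℂ B] [CompleteSpace B] [StarModule ℂ B]

theorem IsSelfAdjoint.commute_of_commute_ringbrkt {a b : B} (ha : IsSelfAdjoint a)
    (h : Commute (ringbrkt b a) a) : Commute b a := by
  let _ : NormedAlgebra ℚ B := .restrictScalars ℚ ℂ B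
  refine Commute.symm (ringbrkt_eq_zero_iff.mp ?_)
  suffices I • ringbrkt a b = 0 by simpa using this
  refine eq_zero_of_forall_norm_add_smul_le (b := b) (C := ‖b‖) fun t ↦ le_of_eq ?_
  set x : B := t • I • a
  have hx : x ∈ skewAdjoint B := skewAdjoint.smul_mem t (ha.smul_mem_skewAdjoint conj_I)
  have hxb : x * b - b * x = t • I • ringbrkt a b := by
    simp only [x, ringbrkt, smul_mul_assoc, mul_smul_comm, smul_sub]
  have hcomm : Commute x (x * b - b * x) := by
    have : Commute a (ringbrkt a b) := by
      simpa [ringbrkt] using h.symm.neg_right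
    rw [hxb]
    exact ((this.smul_left _).smul_right _).smul_left _ |>.smul_right _
  have hu : NormedSpace.exp x ∈ unitary B := exp_mem_unitary_of_mem_skewAdjoint hx
  rw [← hxb, ← exp_mul_mul_exp_neg_of_commute hcomm, ← skewAdjoint.mem_iff.mp hx, ← star_exp,
    CStarRing.norm_mul_mem_unitary _ (Unitary.star_mem hu), CStarRing.norm_mem_unitary_mul _ hu]

theorem StarSubalgebra.commute_of_forall_commute_ringbrkt (A : StarSubalgebra ℂ B) {b : B}
    (h : ∀ a ∈ A, Commute (ringbrkt b a) a) {a : B} (ha : a ∈ A) : Commute b a := by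
  have hre : (ℜ a : B) ∈ A := by
    rw [realPart_apply_coe, ← Complex.coe_smul]
    exact A.smul_mem (add_mem ha (star_mem ha)) _
  have him : (ℑ a : B) ∈ A := by
    rw [imaginaryPart_apply_coe, ← Complex.coe_smul]
    exact A.smul_mem (A.smul_mem (sub_mem ha (star_mem ha)) _) _
  have hself {s : B} (hs : IsSelfAdjoint s) (hsA : s ∈ A) : s ∈ Subalgebra.centralizer ℂ {b} := by
    simpa [Subalgebra.mem_centralizer_iff] using (hs.commute_of_commute_ringbrkt (h s hsA)).eq
  have := add_mem (hself (ℜ a).2 hre) (Subalgebra.smul_mem _ (hself (ℑ a).2 him) I)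
  rw [realPart_add_I_smul_imaginaryPart] at this
  simpa [Subalgebra.mem_centralizer_iff, commute_iff_eq] using this

theorem StarSubalgebra.higherCentralizer_one_eq_two (A : StarSubalgebra ℂ B) :
    higherCentralizer (A : Set B) 1 = higherCentralizer A 2 := by
  ext b
  simp only [mem_higherCentralizer_succ (n := 1), mem_higherCentralizer_one]
  refine ⟨fun h a ha a' _ ↦ ?_, fun h a ha ↦
    A.commute_of_forall_commute_ringbrkt (fun a ha ↦ h a ha a ha) ha⟩
  rw [ringbrkt_eq_zero_iff.mpr (h a ha)]
  exact Commute.zero_left a'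

end CStarRing

theorem stmt11_general {B : Type*} [NormedRing B] [StarRing B] [CStarRing B]
    [NormedAlgebra ℂ B] [CompleteSpace B] [StarModule ℂ B]
    (A : StarSubalgebra ℂ B)
    (b : B) (n : ℕ) (hn : 1 ≤ n) :
    (∀ l : List B, l.length = n → (∀ a ∈ l, a ∈ A) → l.foldl ringbrkt b = 0) ↔
    (∀ l : List B, l.length = n + 1 → (∀ a ∈ l, a ∈ A) → l.foldl ringbrkt b = 0) := by
  suffices higherCentralizer (A : Set B) n = higherCentralizer A (n + 1) from
    Set.ext_iff.mp this b
  induction n, hn using Nat.le_induction with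
  | base => exact A.higherCentralizer_one_eq_two
  | succ n _ ih => exact higherCentralizer_succ_eq_of_eq ih

/-- Let `B` be a unital C*-algebra and `A` a closed star-subalgebra
of `B`. Then the sequence `Z^n(A)` stabilizes from `n = 1`: for `b ∈ B` and `n ≥ 1`,
all `n`-fold iterated commutators of `b` with elements of `A` vanish iff all
`(n+1)`-fold iterated commutators vanish. -/
theorem stmt11 {B : Type*} [NormedRing B] [StarRing B] [CStarRing B]
    [NormedAlgebra ℂ B] [CompleteSpace B] [StarModule ℂ B]
    (A : StarSubalgebra ℂ B) (hA : IsClosed (A : Set B))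
    (b : B) (n : ℕ) (hn : 1 ≤ n) :
    (∀ l : List B, l.length = n → (∀ a ∈ l, a ∈ A) → l.foldl ringbrkt b = 0) ↔
    (∀ l : List B, l.length = n + 1 → (∀ a ∈ l, a ∈ A) → l.foldl ringbrkt b = 0) :=
  stmt11_general A b n hn
end

section
/- Let A be a unital star ℂ-algebra, B a unital C*-algebra, m a natural number, and (D_k)_{k ∈ ℕ^m} a system of partial derivatives from A to B. Then the following are equivalent: (i) for every k, D_k is a differential operator of order at most |k| relative to the homomorphism D₀, i.e. for all a₀, …, a_{|k|} ∈ A the iterated commutator [...[D_k, a₀], …, a_{|k|}] vanishes, where [P, a](x) = P(a·x) − D₀(a)·P(x) and |k| = k₁ + ⋯ + k_m; (ii) for every multi-index k ≠ 0, the range of D_k lies in Z^{|k|}(D₀), i.e. for all a ∈ A and all a₁, …, a_{|k|} ∈ A the iterated ring commutator [...[D_k(a), D₀(a₁)], …, D₀(a_{|k|})] = 0; (iii) for every multi-index k ≠ 0, the range of D_k commutes with D₀(A): D_k(a)·D₀(a') = D₀(a')·D_k(a) for all a, a' ∈ A. -/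
/-!
In a C*-algebra, if `c` is self-adjoint and `[b, c]` commutes with `c`, then `[b, c] = 0`:
conjugating `b` by the unitaries `exp (i s c)` gives `b + i s [c, b]`, whose norm is `‖b‖` for
every real `s`. Iterating, an element of `Z^n(D₀)` with `n ≥ 1` commutes with `D₀(x)` for every
self-adjoint `x`, hence with all of `D₀(A)`; this is (ii) ⇒ (iii), and (iii) ⇒ (ii) is trivial.
The Leibniz rule gives `[D_k, a] = ∑_{l < k} D_{k-l}(a) · D_l`, so under (iii) every bracket
lowers the order and (i) follows by induction on the number of brackets. Conversely, apply (i)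
to `a, x, …, x` and evaluate at `1`: once the `D_j` with `0 < |j| < |k|` are known to commute with
`D₀(A)`, only the term `[…[D_k(a), D₀(x)], …, D₀(x)]` survives, which gives (ii) and hence (iii)
for `k`, by induction on `|k|`.
-/

/-- The commutator `[P, a](x) = P(a·x) − φ(a)·P(x)` of a map `P : A → B` with `a : A`,
relative to a homomorphism `φ : A → B`. -/
def opbrkt {A B : Type*} [Mul A] [Mul B] [Sub B] (φ : A → B) (P : A → B) (a : A) :
    A → B := fun x => P (a * x) - φ a * P x

open Finset

section Brackets

variable {A B : Type*}

theorem foldl_ringbrkt_zero [NonUnitalNonAssocRing B] (t : List B) : t.foldl ringbrkt 0 = 0 := by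
  induction t with
  | nil => rfl
  | cons c t ih => simpa [ringbrkt] using ih

theorem foldl_ringbrkt_cons_eq_zero [NonUnitalNonAssocRing B] {b c : B} (h : Commute b c)
    (t : List B) : (c :: t).foldl ringbrkt b = 0 := by
  rw [List.foldl_cons, show ringbrkt b c = 0 from sub_eq_zero.mpr h, foldl_ringbrkt_zero]

variable [Mul A] [NonUnitalRing B] (φ : A → B)

theorem foldl_opbrkt_zero (t : List A) : t.foldl (opbrkt φ) 0 = 0 := by
  induction t with
  | nil => rfl
  | cons a t ih =>
    have hstep : opbrkt φ 0 a = 0 := by funext x; simp [opbrkt]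
    rwa [List.foldl_cons, hstep]

theorem foldl_opbrkt_eq_zero_of_le_length {P : A → B} {n : ℕ}
    (h : ∀ t : List A, t.length = n → t.foldl (opbrkt φ) P = 0) {t : List A}
    (ht : n ≤ t.length) : t.foldl (opbrkt φ) P = 0 := by
  rw [← List.take_append_drop n t, List.foldl_append, h _ (by simpa using ht),
    foldl_opbrkt_zero]

theorem foldl_opbrkt_sum {ι : Type*} (s : Finset ι) (F : ι → A → B) (t : List A) (x : A) :
    t.foldl (opbrkt φ) (fun y => ∑ i ∈ s, F i y) x = ∑ i ∈ s, t.foldl (opbrkt φ) (F i) x := by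
  induction t generalizing F with
  | nil => rfl
  | cons a t ih =>
    have hstep : opbrkt φ (fun x => ∑ i ∈ s, F i x) a =
        fun x => ∑ i ∈ s, opbrkt φ (F i) a x := by
      funext x
      simp only [opbrkt, mul_sum, sum_sub_distrib]
    rw [List.foldl_cons, hstep, ih]
    rfl

theorem foldl_opbrkt_const_mul {c : B} (hc : ∀ a, Commute c (φ a)) (P : A → B) (t : List A)
    (x : A) : t.foldl (opbrkt φ) (fun y => c * P y) x = c * t.foldl (opbrkt φ) P x := by
  induction t generalizing P with
  | nil => rfl
  | cons a t ih =>
    have hstep : opbrkt φ (fun x => c * P x) a = fun x => c * opbrkt φ P a x := by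
      funext x
      simp only [opbrkt, mul_sub, ← mul_assoc, (hc a).eq]
    rw [List.foldl_cons, hstep, ih]
    rfl

theorem foldl_opbrkt_mul_map (hφ : ∀ a x, φ (a * x) = φ a * φ x) (c : B) (t : List A)
    (x : A) : t.foldl (opbrkt φ) (fun y => c * φ y) x = (t.map φ).foldl ringbrkt c * φ x := by
  induction t generalizing c with
  | nil => rfl
  | cons a t ih =>
    have hstep : opbrkt φ (fun x => c * φ x) a = fun x => ringbrkt c (φ a) * φ x := by
      funext x
      simp only [opbrkt, ringbrkt, hφ, sub_mul, mul_assoc]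
    rw [List.foldl_cons, hstep, ih]
    rfl

end Brackets

namespace Finsupp

theorem degree_tsub_add_degree {σ : Type*} {k l : σ →₀ ℕ} (h : l ≤ k) :
    (k - l).degree + l.degree = k.degree := by
  rw [← map_add, tsub_add_cancel_of_le h]

theorem degree_pos {σ : Type*} {k : σ →₀ ℕ} (hk : k ≠ 0) : 0 < k.degree :=
  Nat.pos_of_ne_zero ((degree_eq_zero_iff k).not.mpr hk)

theorem degree_lt_degree {σ : Type*} {k l : σ →₀ ℕ} (h : l < k) : l.degree < k.degree := by
  have := degree_tsub_add_degree h.le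
  have := degree_pos (tsub_pos_of_lt h).ne'
  omega

end Finsupp

section Leibniz

variable {σ A B : Type*} [DecidableEq σ] [Ring A] [Ring B]

def LeibnizRule (D : (σ →₀ ℕ) → A → B) : Prop :=
  ∀ k a b, D k (a * b) = ∑ l ∈ Iic k, D (k - l) a * D l b

variable {D : (σ →₀ ℕ) → A → B}

theorem LeibnizRule.map_mul_zero (hD : LeibnizRule D) (a b : A) :
    D 0 (a * b) = D 0 a * D 0 b := by
  rw [hD, show Iic (0 : σ →₀ ℕ) = {0} by ext; simp, sum_singleton, tsub_zero]

theorem LeibnizRule.opbrkt_eq_sum_Iio (hD : LeibnizRule D) (k : σ →₀ ℕ) (a : A) :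
    opbrkt (D 0) (D k) a = fun x => ∑ l ∈ Iio k, D (k - l) a * D l x := by
  funext x
  rw [opbrkt, hD, ← Iio_insert, sum_insert notMem_Iio_self, tsub_self, add_sub_cancel_left]

theorem LeibnizRule.foldl_opbrkt_eq_zero_of_commute (hD : LeibnizRule D)
    (hcomm : ∀ k ≠ 0, ∀ a a', Commute (D k a) (D 0 a')) (t : List A) (k : σ →₀ ℕ)
    (hk : k.degree < t.length) : t.foldl (opbrkt (D 0)) (D k) = 0 := by
  induction t generalizing k with
  | nil => simp at hk
  | cons a t ih =>
    funext x
    rw [List.foldl_cons, hD.opbrkt_eq_sum_Iio, foldl_opbrkt_sum]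
    refine sum_eq_zero fun l hl => ?_
    have hlk : l < k := mem_Iio.mp hl
    have hdeg := Finsupp.degree_lt_degree hlk
    rw [foldl_opbrkt_const_mul _ (hcomm _ (tsub_pos_of_lt hlk).ne' a),
      ih l (by simp only [List.length_cons] at hk; omega)]
    simp

theorem LeibnizRule.foldl_ringbrkt_eq_zero_of_foldl_opbrkt (hD : LeibnizRule D)
    (hone : D 0 1 = 1)
    (hi : ∀ j (t : List A), t.length = j.degree + 1 → t.foldl (opbrkt (D 0)) (D j) = 0)
    {k : σ →₀ ℕ} (hk : k ≠ 0)
    (hlow : ∀ j ≠ 0, j.degree < k.degree → ∀ a a', Commute (D j a) (D 0 a'))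
    (a : A) (t : List A) (ht : t.length = k.degree) :
    (t.map (D 0)).foldl ringbrkt (D k a) = 0 := by
  have h := congrFun (hi k (a :: t) (by simp [ht])) 1
  rw [List.foldl_cons, hD.opbrkt_eq_sum_Iio, foldl_opbrkt_sum, Pi.zero_apply,
    ← add_sum_erase _ _ (mem_Iio.mpr (pos_iff_ne_zero.mpr hk))] at h
  have hhigher : ∀ l ∈ (Iio k).erase 0,
      t.foldl (opbrkt (D 0)) (fun x => D (k - l) a * D l x) 1 = 0 := by
    intro l hl
    obtain ⟨hl0, hlk⟩ := mem_erase.mp hl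
    have hlk := mem_Iio.mp hlk
    have hsplit := Finsupp.degree_tsub_add_degree hlk.le
    have hl_pos := Finsupp.degree_pos hl0
    have hlt := Finsupp.degree_lt_degree hlk
    rw [foldl_opbrkt_const_mul _ (hlow _ (tsub_pos_of_lt hlk).ne' (by omega) a),
      foldl_opbrkt_eq_zero_of_le_length _ (hi l) (by omega)]
    simp
  rw [sum_eq_zero hhigher, add_zero, tsub_zero,
    foldl_opbrkt_mul_map _ hD.map_mul_zero, hone, mul_one] at h
  exact h

end Leibniz

theorem LinearMap.commute_of_forall_isSelfAdjoint {A : Type*} [AddCommGroup A] [Module ℂ A]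
    [StarAddMonoid A] [StarModule ℂ A] {B : Type*} [Ring B] [Algebra ℂ B] (f : A →ₗ[ℂ] B) {b : B}
    (h : ∀ x, IsSelfAdjoint x → Commute b (f x)) (a : A) : Commute b (f a) := by
  rw [← realPart_add_I_smul_imaginaryPart a, map_add, map_smul]
  exact (h _ (realPart a).2).add_right ((h _ (imaginaryPart a).2).smul_right Complex.I)

section CStar

open NormedSpace

theorem exp_smul_mul_mul_exp_neg_smul {𝕂 𝔸 : Type*} [RCLike 𝕂] [NormedRing 𝔸]
    [NormedAlgebra 𝕂 𝔸] [CompleteSpace 𝔸] {x b : 𝔸} (h : Commute x (x * b - b * x)) (t : 𝕂) :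
    exp (t • x) * b * exp (-(t • x)) = b + t • (x * b - b * x) := by
  set e := x * b - b * x
  have hexp : ∀ s : 𝕂, exp (s • x) * exp (s • -x) = 1 := fun s => by
    have hr : ∀ y : 𝔸, y ∈ Metric.eball (0 : 𝔸) (expSeries 𝕂 𝔸).radius := fun y => by
      simp [expSeries_radius_eq_top]
    rw [← exp_add_of_commute_of_mem_ball (((Commute.refl x).neg_right.smul_left s).smul_right s)
      (hr _) (hr _), smul_neg, add_neg_cancel, exp_zero]
  have hderiv : ∀ s : 𝕂,
      HasDerivAt (fun s : 𝕂 => exp (s • x) * b * exp (s • -x) - s • e) 0 s := by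
    intro s
    refine ((((hasDerivAt_exp_smul_const' x s).mul_const b).mul
      (hasDerivAt_exp_smul_const (-x) s)).sub ((hasDerivAt_id s).smul_const e)).congr_deriv ?_
    have hxE : x * exp (s • x) = exp (s • x) * x := ((Commute.refl x).smul_right s).exp_right.eq
    have hxE' : exp (s • -x) * x = x * exp (s • -x) :=
      ((Commute.refl x).neg_right.smul_right s).exp_right.eq.symm
    have heE : e * exp (s • -x) = exp (s • -x) * e := (h.symm.neg_right.smul_right s).exp_right.eq
    rw [mul_neg, hxE', hxE, one_smul, sub_eq_zero]
    calc exp (s • x) * x * b * exp (s • -x) + exp (s • x) * b * -(x * exp (s • -x))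
        = exp (s • x) * (e * exp (s • -x)) := by simp only [e]; noncomm_ring
      _ = e := by rw [heE, ← mul_assoc, hexp, one_mul]
  have := is_const_of_deriv_eq_zero (fun s => (hderiv s).differentiableAt)
    (fun s => (hderiv s).deriv) t 0
  simp only [zero_smul, exp_zero, mul_one, one_mul, sub_zero] at this
  rw [← smul_neg, ← sub_eq_iff_eq_add, this]

variable {B : Type*} [NormedRing B] [StarRing B] [CStarRing B] [NormedAlgebra ℂ B]
  [CompleteSpace B] [StarModule ℂ B]

theorem IsSelfAdjoint.commute_of_commute_commutator {b c : B} (hc : IsSelfAdjoint c)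
    (h : Commute (b * c - c * b) c) : Commute b c := by
  let : NormedAlgebra ℚ B := .restrictScalars ℚ ℂ B
  set d := c * b - b * c
  have hcd : Commute c d := by rw [show d = -(b * c - c * b) by simp [d]]; exact h.symm.neg_right
  have hbound : ∀ s : ℝ, |s| * ‖d‖ ≤ 2 * ‖b‖ := fun s => by
    have hskew : ((s * Complex.I : ℂ) • c) ∈ skewAdjoint B :=
      hc.smul_mem_skewAdjoint (by simp [skewAdjoint.mem_iff])
    have hconj : ‖b + (s * Complex.I : ℂ) • d‖ = ‖b‖ := by
      rw [← exp_smul_mul_mul_exp_neg_smul hcd, CStarRing.norm_mul_mem_unitary _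
        (exp_mem_unitary_of_mem_skewAdjoint (neg_mem hskew)),
        CStarRing.norm_mem_unitary_mul _ (exp_mem_unitary_of_mem_skewAdjoint hskew)]
    calc |s| * ‖d‖ = ‖(b + (s * Complex.I : ℂ) • d) - b‖ := by
          rw [add_sub_cancel_left, norm_smul]; simp
      _ ≤ ‖b + (s * Complex.I : ℂ) • d‖ + ‖b‖ := norm_sub_le _ _
      _ = 2 * ‖b‖ := by rw [hconj]; ring
  have hd : d = 0 := by
    by_contra hne
    have hpos : 0 < ‖d‖ := norm_pos_iff.mpr hne
    have := hbound ((2 * ‖b‖ + 1) / ‖d‖)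
    rw [abs_of_nonneg (by positivity), div_mul_cancel₀ _ hpos.ne'] at this
    linarith
  exact (sub_eq_zero.mp hd).symm

theorem IsSelfAdjoint.commute_of_foldl_ringbrkt_replicate_eq_zero {b c : B}
    (hc : IsSelfAdjoint c) (n : ℕ) (h : (List.replicate (n + 1) c).foldl ringbrkt b = 0) :
    Commute b c := by
  induction n generalizing b with
  | zero => exact sub_eq_zero.mp h
  | succ n ih => exact hc.commute_of_commute_commutator (ih h)

theorem LinearMap.commute_of_forall_foldl_ringbrkt_eq_zero {A : Type*} [AddCommGroup A]
    [Module ℂ A] [StarAddMonoid A] [StarModule ℂ A] (f : A →ₗ[ℂ] B)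
    (hf : ∀ a, f (star a) = star (f a)) {b : B} {n : ℕ} (hn : n ≠ 0)
    (h : ∀ t : List A, t.length = n → (t.map f).foldl ringbrkt b = 0) (a : A) :
    Commute b (f a) := by
  refine f.commute_of_forall_isSelfAdjoint (fun x hx => ?_) a
  have hfx : IsSelfAdjoint (f x) := by rw [IsSelfAdjoint, ← hf, hx.star_eq]
  obtain ⟨n, rfl⟩ := Nat.exists_eq_succ_of_ne_zero hn
  have := h (List.replicate (n + 1) x) List.length_replicate
  rw [List.map_replicate] at this
  exact hfx.commute_of_foldl_ringbrkt_replicate_eq_zero n this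

end CStar

theorem stmt17_general {A B : Type*} [Ring A] [Algebra ℂ A] [StarRing A] [StarModule ℂ A]
    [NormedRing B] [StarRing B] [CStarRing B] [NormedAlgebra ℂ B] [CompleteSpace B]
    [StarModule ℂ B]
    (m : ℕ) (Dk : (Fin m →₀ ℕ) → A → B)
    (hadd : ∀ (k : Fin m →₀ ℕ) (a b : A), Dk k (a + b) = Dk k a + Dk k b)
    (hsmul : ∀ (k : Fin m →₀ ℕ) (c : ℂ) (a : A), Dk k (c • a) = c • Dk k a)
    (hstar : ∀ (k : Fin m →₀ ℕ) (a : A), Dk k (star a) = star (Dk k a))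
    (hone : Dk 0 1 = 1)
    (hmul : ∀ (k : Fin m →₀ ℕ) (a b : A),
      Dk k (a * b) = ∑ l ∈ Finset.Iic k, Dk (k - l) a * Dk l b) :
    -- (i) ↔ (ii)
    ((∀ k : Fin m →₀ ℕ, ∀ l : List A, l.length = (∑ i, k i) + 1 →
        l.foldl (opbrkt (Dk 0)) (Dk k) = 0) ↔
     (∀ k : Fin m →₀ ℕ, k ≠ 0 → ∀ a : A, ∀ l : List A, l.length = (∑ i, k i) →
        (l.map (Dk 0)).foldl ringbrkt (Dk k a) = 0)) ∧
    -- (ii) ↔ (iii)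
    ((∀ k : Fin m →₀ ℕ, k ≠ 0 → ∀ a : A, ∀ l : List A, l.length = (∑ i, k i) →
        (l.map (Dk 0)).foldl ringbrkt (Dk k a) = 0) ↔
     (∀ k : Fin m →₀ ℕ, k ≠ 0 → ∀ a a' : A,
        Dk k a * Dk 0 a' = Dk 0 a' * Dk k a)) := by
  simp only [← Finsupp.degree_eq_sum]
  let D₀ : A →ₗ[ℂ] B := { toFun := Dk 0, map_add' := hadd 0, map_smul' := hsmul 0 }
  have h23 : (∀ k ≠ 0, ∀ a, ∀ t : List A, t.length = k.degree →
      (t.map (Dk 0)).foldl ringbrkt (Dk k a) = 0) → ∀ k ≠ 0, ∀ a a', Commute (Dk k a) (Dk 0 a') :=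
    fun h2 k hk a =>
      D₀.commute_of_forall_foldl_ringbrkt_eq_zero (hstar 0) (Finsupp.degree_pos hk).ne' (h2 k hk a)
  have h32 : (∀ k ≠ 0, ∀ a a', Commute (Dk k a) (Dk 0 a')) → ∀ k ≠ 0, ∀ a, ∀ t : List A,
      t.length = k.degree → (t.map (Dk 0)).foldl ringbrkt (Dk k a) = 0
    | _, k, hk, _, [], ht => absurd ht (Finsupp.degree_pos hk).ne
    | h3, k, hk, a, a₁ :: _, _ => foldl_ringbrkt_cons_eq_zero (h3 k hk a a₁) _
  have h31 : (∀ k ≠ 0, ∀ a a', Commute (Dk k a) (Dk 0 a')) →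
      ∀ k (t : List A), t.length = k.degree + 1 → t.foldl (opbrkt (Dk 0)) (Dk k) = 0 :=
    fun h3 k t ht => LeibnizRule.foldl_opbrkt_eq_zero_of_commute hmul h3 t k (by omega)
  have h13 : (∀ k (t : List A), t.length = k.degree + 1 → t.foldl (opbrkt (Dk 0)) (Dk k) = 0) →
      ∀ k ≠ 0, ∀ a a', Commute (Dk k a) (Dk 0 a') := by
    intro h1 k
    induction hn : k.degree using Nat.strong_induction_on generalizing k with
    | _ n ih =>
      intro hk a
      exact D₀.commute_of_forall_foldl_ringbrkt_eq_zero (hstar 0) (Finsupp.degree_pos hk).ne'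
        (LeibnizRule.foldl_ringbrkt_eq_zero_of_foldl_opbrkt hmul hone h1 hk
          (fun j hj hjk => ih _ (hn ▸ hjk) j rfl hj) a)
  exact ⟨⟨fun h1 => h32 (h13 h1), fun h2 => h31 (h23 h2)⟩, h23, h32⟩

/-- Let `A` be a unital star ℂ-algebra, `B` a unital C*-algebra,
and `(D_k)_{k ∈ ℕ^m}` a system of partial derivatives from `A` to `B`. Then the
following are equivalent: (i) every `D_k` is a differential operator of order at most
`|k|` relative to `D₀`; (ii) for every `k ≠ 0` the range of `D_k` lies in
`Z^{|k|}(D₀)`; (iii) for every `k ≠ 0` the range of `D_k` commutes with `D₀(A)`. -/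
theorem stmt17 {A B : Type*} [Ring A] [Algebra ℂ A] [StarRing A] [StarModule ℂ A]
    [NormedRing B] [StarRing B] [CStarRing B] [NormedAlgebra ℂ B] [CompleteSpace B]
    [StarModule ℂ B]
    (m : ℕ) (Dk : (Fin m →₀ ℕ) → A → B)
    (hadd : ∀ (k : Fin m →₀ ℕ) (a b : A), Dk k (a + b) = Dk k a + Dk k b)
    (hsmul : ∀ (k : Fin m →₀ ℕ) (c : ℂ) (a : A), Dk k (c • a) = c • Dk k a)
    (hstar : ∀ (k : Fin m →₀ ℕ) (a : A), Dk k (star a) = star (Dk k a))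
    (hone : Dk 0 1 = 1)
    (hone' : ∀ k : Fin m →₀ ℕ, k ≠ 0 → Dk k 1 = 0)
    (hmul : ∀ (k : Fin m →₀ ℕ) (a b : A),
      Dk k (a * b) = ∑ l ∈ Finset.Iic k, Dk (k - l) a * Dk l b) :
    -- (i) ↔ (ii)
    ((∀ k : Fin m →₀ ℕ, ∀ l : List A, l.length = (∑ i, k i) + 1 →
        l.foldl (opbrkt (Dk 0)) (Dk k) = 0) ↔
     (∀ k : Fin m →₀ ℕ, k ≠ 0 → ∀ a : A, ∀ l : List A, l.length = (∑ i, k i) →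
        (l.map (Dk 0)).foldl ringbrkt (Dk k a) = 0)) ∧
    -- (ii) ↔ (iii)
    ((∀ k : Fin m →₀ ℕ, k ≠ 0 → ∀ a : A, ∀ l : List A, l.length = (∑ i, k i) →
        (l.map (Dk 0)).foldl ringbrkt (Dk k a) = 0) ↔
     (∀ k : Fin m →₀ ℕ, k ≠ 0 → ∀ a a' : A,
        Dk k a * Dk 0 a' = Dk 0 a' * Dk k a)) :=
  stmt17_general m Dk hadd hsmul hstar hone hmul
end
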